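/- arXiv:quant-ph/0410042 — 5 statements merged into one kernel-verified Lean document; each statement's English description precedes it below -/
import Mathlib

section
/- (Correctness of the Deutsch–Jozsa algorithm) Let f be an n-variable Boolean function. If f is constant then W_f(0)² = 2^{2n} (so the all-zero state is measured with probability 1), and if f is balanced (i.e. wt(f) = 2^{n−1}) then W_f(0) = 0 (so the all-zero state is measured with probability 0). -/
/-- Walsh transform of an n-variable Boolean function at point ω. -/
def walsh {n : ℕ} (f : (Fin n → ZMod 2) → ZMod 2) (ω : Fin n → ZMod 2) : ℤ :=
  ∑ x : Fin n → ZMod 2, (-1 : ℤ) ^ (f x + ∑ i, ω i * x i).val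

/-- The linear Boolean function x ↦ ω·x. -/
def linfun {n : ℕ} (ω : Fin n → ZMod 2) : (Fin n → ZMod 2) → ZMod 2 :=
  fun x => ∑ i, ω i * x i

/-- Hamming distance between two n-variable Boolean functions. -/
def hamming {n : ℕ} (f g : (Fin n → ZMod 2) → ZMod 2) : ℕ :=
  (Finset.univ.filter fun x => f x ≠ g x).card

lemma walsh_zero {n : ℕ} (f : (Fin n → ZMod 2) → ZMod 2) :
    walsh f 0 = 2 ^ n - 2 * ((Finset.univ.filter fun x : Fin n → ZMod 2 => f x = 1).card : ℤ) := by
  unfold walsh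
  have h : ∀ x : Fin n → ZMod 2, (-1 : ℤ) ^ (f x + ∑ i, (0 : Fin n → ZMod 2) i * x i).val
      = if f x = 1 then -1 else 1 := by
    intro x
    have hz : (∑ i, (0 : Fin n → ZMod 2) i * x i) = 0 := by simp
    rw [hz, add_zero]
    have h01 : ∀ a : ZMod 2, (-1 : ℤ) ^ a.val = if a = 1 then -1 else 1 := by decide
    exact h01 (f x)
  rw [Finset.sum_congr rfl fun x _ => h x, Finset.sum_ite, Finset.sum_const, Finset.sum_const]
  rw [Finset.filter_not, Finset.card_sdiff_of_subset (Finset.filter_subset _ _)]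
  have hc : (Finset.univ : Finset (Fin n → ZMod 2)).card = 2 ^ n := by
    simp [Finset.card_univ]
  have hle : (Finset.univ.filter fun x : Fin n → ZMod 2 => f x = 1).card ≤ 2 ^ n := by
    rw [← hc]; exact Finset.card_filter_le _ _
  rw [hc]
  simp only [nsmul_eq_mul, mul_one, mul_neg_one, Nat.cast_sub hle]
  push_cast
  ring

theorem stmt_4 {n : ℕ} (f : (Fin n → ZMod 2) → ZMod 2) :
    ((∃ c, ∀ x, f x = c) → (walsh f 0) ^ 2 = 2 ^ (2 * n)) ∧
    (2 * (Finset.univ.filter fun x : Fin n → ZMod 2 => f x = 1).card = 2 ^ n →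
      walsh f 0 = 0) := by
  constructor
  · rintro ⟨c, hc⟩
    rw [walsh_zero]
    have h01 : c = 0 ∨ c = 1 := by
      have : ∀ a : ZMod 2, a = 0 ∨ a = 1 := by decide
      exact this c
    rcases h01 with rfl | rfl
    · have : (Finset.univ.filter fun x : Fin n → ZMod 2 => f x = 1) = ∅ := by
        ext x; simp [hc x]
      rw [this]
      simp only [Finset.card_empty, Nat.cast_zero, mul_zero, sub_zero]
      rw [sq, two_mul, pow_add]
    · have : (Finset.univ.filter fun x : Fin n → ZMod 2 => f x = 1) = Finset.univ := by
        ext x; simp [hc x]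
      rw [this]
      have : ((Finset.univ : Finset (Fin n → ZMod 2)).card : ℤ) = 2 ^ n := by
        simp [Finset.card_univ]
      rw [this]
      have : ((2:ℤ) ^ n - 2 * 2 ^ n) ^ 2 = 2 ^ n * 2 ^ n := by ring
      rw [this, ← pow_add, ← two_mul]
  · intro hbal
    rw [walsh_zero]
    have : (2 : ℤ) * ((Finset.univ.filter fun x : Fin n → ZMod 2 => f x = 1).card : ℤ) = 2 ^ n := by
      exact_mod_cast congrArg (Nat.cast : ℕ → ℤ) hbal
    omega
end

section
/- Let n ≥ 3, let f be an n-variable Boolean function, and suppose d(f, ℓ_{ω̂}) ≤ 2^{n−3} for some ω̂ ∈ {0,1}^n. Then W_f(ω̂) ≥ 2^n − 2^{n−2} = 3·2^{n−2}, and hence the probability W_f(ω̂)²/2^{2n} that the Deutsch–Jozsa measurement outputs ω̂ is at least 9/16. -/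
lemma walsh_eq {n : ℕ} (f : (Fin n → ZMod 2) → ZMod 2) (ω : Fin n → ZMod 2) :
    walsh f ω = 2 ^ n - 2 * (hamming f (linfun ω) : ℤ) := by
  have key : ∀ a b : ZMod 2, (-1 : ℤ) ^ (a + b).val
      = 1 - 2 * (if a ≠ b then (1:ℤ) else 0) := by decide
  have : walsh f ω = ∑ x : Fin n → ZMod 2,
      (1 - 2 * (if f x ≠ linfun ω x then (1:ℤ) else 0)) := by
    unfold walsh linfun
    exact Finset.sum_congr rfl fun x _ => key _ _
  rw [this, Finset.sum_sub_distrib, ← Finset.mul_sum, Finset.sum_boole]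
  simp [hamming, Fintype.card_fun, Fintype.card_pi]

theorem stmt_13 {n : ℕ} (hn : 3 ≤ n) (f : (Fin n → ZMod 2) → ZMod 2)
    (ω' : Fin n → ZMod 2) (h : hamming f (linfun ω') ≤ 2 ^ (n - 3)) :
    walsh f ω' ≥ 2 ^ n - 2 ^ (n - 2) ∧
    ((2 : ℤ) ^ n - 2 ^ (n - 2) = 3 * 2 ^ (n - 2)) ∧
    ((walsh f ω' : ℚ) ^ 2 / 2 ^ (2 * n) ≥ 9 / 16) := by
  obtain ⟨m, rfl⟩ : ∃ m, n = m + 3 := ⟨n - 3, by omega⟩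
  have hs1 : m + 3 - 3 = m := by omega
  have hs2 : m + 3 - 2 = m + 1 := by omega
  rw [hs1] at h
  rw [hs2]
  have hZ : (hamming f (linfun ω') : ℤ) ≤ 2 ^ m := by exact_mod_cast h
  have h1 : walsh f ω' ≥ 2 ^ (m + 3) - 2 ^ (m + 1) := by
    rw [walsh_eq]
    have : (2:ℤ) ^ (m + 1) = 2 * 2 ^ m := by ring
    linarith
  have h2 : (2 : ℤ) ^ (m + 3) - 2 ^ (m + 1) = 3 * 2 ^ (m + 1) := by ring
  refine ⟨h1, h2, ?_⟩
  have h3 : (walsh f ω' : ℚ) ≥ 3 * 2 ^ (m + 1) := by exact_mod_cast h2 ▸ h1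
  have hpos : (0:ℚ) < 2 ^ (2 * (m + 3)) := by positivity
  rw [ge_iff_le, le_div_iff₀ hpos]
  have e2 : (2 : ℚ) ^ (2 * (m + 3)) = 16 * (2 ^ (m + 1)) ^ 2 := by
    rw [← pow_mul, show 2 * (m + 3) = (m + 1) * 2 + 4 by ring, pow_add]
    ring
  have hnn : (0:ℚ) ≤ 3 * 2 ^ (m + 1) := by positivity
  nlinarith [sq_nonneg ((walsh f ω' : ℚ) - 3 * 2 ^ (m + 1))]
end

section
/- Let n ≥ 3, let f be an n-variable Boolean function, and suppose d(f, ℓ_{ω̂}) ≤ 2^{n−3} for some ω̂ ∈ {0,1}^n. Then |W_f(ω̂)| = max_{ω ∈ {0,1}^n} |W_f(ω)|; moreover |W_f(z)| < |W_f(ω̂)| for every z ≠ ω̂. -/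
lemma hamming_comm {n : ℕ} (f g : (Fin n → ZMod 2) → ZMod 2) :
    hamming f g = hamming g f :=
  hammingDist_comm f g

lemma hamming_triangle {n : ℕ} (f g h : (Fin n → ZMod 2) → ZMod 2) :
    hamming f h ≤ hamming f g + hamming g h :=
  hammingDist_triangle f g h

lemma linfun_add {n : ℕ} (ω x y : Fin n → ZMod 2) :
    linfun ω (x + y) = linfun ω x + linfun ω y := by
  simp only [linfun, Pi.add_apply, mul_add, Finset.sum_add_distrib]

lemma linfun_single_one {n : ℕ} (ω : Fin n → ZMod 2) (i : Fin n) :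
    linfun ω (Pi.single i 1) = ω i := by
  simp [linfun, Pi.single_apply]

lemma zmod_two_neg_one_pow_val_add (a b : ZMod 2) :
    (-1 : ℤ) ^ (a + b).val = 1 - 2 * if a ≠ b then 1 else 0 := by
  revert a b; decide

lemma zmod_two_neg_one_pow_val_add_one (a : ZMod 2) :
    (-1 : ℤ) ^ (a + 1).val = -(-1) ^ a.val := by
  revert a; decide

lemma zmod_two_add_eq_one_of_ne {a b : ZMod 2} : a ≠ b → a + b = 1 := by
  revert a b; decide

lemma walsh_def {n : ℕ} (f : (Fin n → ZMod 2) → ZMod 2) (ω : Fin n → ZMod 2) :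
    walsh f ω = ∑ x, (-1 : ℤ) ^ (f x + linfun ω x).val := rfl

theorem walsh_eq_two_pow_sub_hamming {n : ℕ} (f : (Fin n → ZMod 2) → ZMod 2)
    (ω : Fin n → ZMod 2) : walsh f ω = 2 ^ n - 2 * hamming f (linfun ω) := by
  simp only [walsh_def, zmod_two_neg_one_pow_val_add, Finset.sum_sub_distrib,
    ← Finset.mul_sum, Finset.sum_boole, hamming]
  simp

theorem Fintype.sum_eq_zero_of_map_add_eq_neg {G M : Type*} [AddGroup G] [Fintype G]
    [AddCommGroup M] [IsAddTorsionFree M] (χ : G → M) (a : G) (h : ∀ x, χ (x + a) = -χ x) :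
    ∑ x, χ x = 0 :=
  self_eq_neg.mp <| calc
    ∑ x, χ x = ∑ x, χ (x + a) := (Fintype.sum_equiv (Equiv.addRight a) _ _ fun _ => rfl).symm
    _ = -∑ x, χ x := by simp only [h, Finset.sum_neg_distrib]

/-- Translating by a basis vector on which `z` and `w` differ flips every term of the sum. -/
theorem walsh_linfun_of_ne {n : ℕ} {z w : Fin n → ZMod 2} (hzw : z ≠ w) :
    walsh (linfun z) w = 0 := by
  obtain ⟨i, hi⟩ := Function.ne_iff.mp hzw
  rw [walsh_def]
  refine Fintype.sum_eq_zero_of_map_add_eq_neg _ (Pi.single i 1) fun x => ?_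
  rw [linfun_add, linfun_add, linfun_single_one, linfun_single_one, add_add_add_comm,
    zmod_two_add_eq_one_of_ne hi, zmod_two_neg_one_pow_val_add_one]

theorem two_mul_hamming_linfun_of_ne {n : ℕ} {z w : Fin n → ZMod 2} (hzw : z ≠ w) :
    2 * (hamming (linfun z) (linfun w) : ℤ) = 2 ^ n := by
  have := walsh_eq_two_pow_sub_hamming (linfun z) w
  rw [walsh_linfun_of_ne hzw] at this
  linarith

theorem abs_walsh_lt_of_four_mul_hamming_lt {n : ℕ} {f : (Fin n → ZMod 2) → ZMod 2}
    {z w : Fin n → ZMod 2} (hf : 4 * hamming f (linfun w) < 2 ^ n) (hzw : z ≠ w) :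
    |walsh f z| < |walsh f w| := by
  have hlin := two_mul_hamming_linfun_of_ne hzw
  have hle : hamming (linfun z) (linfun w) ≤ hamming f (linfun z) + hamming f (linfun w) :=
    hamming_comm f (linfun z) ▸ hamming_triangle _ f _
  have hge : hamming f (linfun z) ≤ hamming f (linfun w) + hamming (linfun z) (linfun w) :=
    hamming_comm (linfun z) (linfun w) ▸ hamming_triangle f _ _
  zify at hf hle hge
  have hw : |walsh f w| = 2 ^ n - 2 * hamming f (linfun w) := by
    rw [walsh_eq_two_pow_sub_hamming, abs_of_pos]
    linarith
  rw [hw, walsh_eq_two_pow_sub_hamming, abs_lt]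
  constructor <;> linarith

theorem stmt_14 {n : ℕ} (hn : 3 ≤ n) (f : (Fin n → ZMod 2) → ZMod 2)
    (ω' : Fin n → ZMod 2) (h : hamming f (linfun ω') ≤ 2 ^ (n - 3)) :
    (∀ ω : Fin n → ZMod 2, |walsh f ω| ≤ |walsh f ω'|) ∧
    (∀ z : Fin n → ZMod 2, z ≠ ω' → |walsh f z| < |walsh f ω'|) := by
  have hf : 4 * hamming f (linfun ω') < 2 ^ n := by
    obtain ⟨m, rfl⟩ := Nat.exists_eq_add_of_le' hn
    rw [Nat.add_sub_cancel] at h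
    have hpos : 0 < 2 ^ m := by positivity
    rw [pow_add]
    omega
  have hlt : ∀ z, z ≠ ω' → |walsh f z| < |walsh f ω'| :=
    fun _ hz => abs_walsh_lt_of_four_mul_hamming_lt hf hz
  refine ⟨fun ω => ?_, hlt⟩
  rcases eq_or_ne ω ω' with rfl | hω
  · exact le_rfl
  · exact (hlt ω hω).le
end

section
/- Let 0 < ε < (3 − 2√2)/4 and n ≥ 3, and assume (3 − 2√2 − 4ε)·2^{n−3} ≥ 1. Define 𝓛_n = {f : ∃ ω, d(f, ℓ_ω) ≤ 2^{n−3}} and 𝓛_{n,ε} = {f : ∃ ω, d(f, ℓ_ω) ≤ (1 + (3 − 2√2 − 4ε))·2^{n−3}} (the latter distance bound being an inequality of real numbers). Then |𝓛_{n,ε}| > |𝓛_n|. -/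
open Finset

lemma ZMod.ne_zero_iff_eq_one_mod_two (a : ZMod 2) : a ≠ 0 ↔ a = 1 := by
  revert a; decide

lemma AddMonoidHom.two_mul_card_fiber_one_eq_card {G : Type*} [AddGroup G] [Fintype G]
    (φ : G →+ ZMod 2) (hφ : φ ≠ 0) : 2 * #{g | φ g = 1} = Fintype.card G := by
  obtain ⟨g, hg⟩ : ∃ g, φ g ≠ 0 := by
    by_contra! h
    exact hφ (AddMonoidHom.ext h)
  have hfibers : #{g | φ g = 0} = #{g | φ g = 1} :=
    AddMonoidHom.card_fiber_eq_of_mem_range φ ⟨0, map_zero φ⟩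
      ⟨g, (ZMod.ne_zero_iff_eq_one_mod_two _).1 hg⟩
  have hsplit := card_filter_add_card_filter_not (s := univ) fun g => φ g = 1
  have hcomplement : #{g | ¬φ g = 1} = #{g | φ g = 0} := by
    congr 1
    ext g
    simp [← ZMod.ne_zero_iff_eq_one_mod_two]
  rw [hcomplement, card_univ] at hsplit
  omega

lemma hamming_eq_hammingDist {n : ℕ} (f g : (Fin n → ZMod 2) → ZMod 2) :
    hamming f g = hammingDist f g :=
  rfl

lemma linfun_zero {n : ℕ} : linfun (0 : Fin n → ZMod 2) = 0 := by
  funext x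
  simp [linfun]

def linfunHom {n : ℕ} (ω : Fin n → ZMod 2) : (Fin n → ZMod 2) →+ ZMod 2 :=
  AddMonoidHom.mk' (linfun ω) fun x y => by
    simp [linfun, mul_add, sum_add_distrib]

@[simp]
lemma linfunHom_apply {n : ℕ} (ω x : Fin n → ZMod 2) : linfunHom ω x = linfun ω x :=
  rfl

lemma linfunHom_ne_zero {n : ℕ} {ω : Fin n → ZMod 2} (hω : ω ≠ 0) : linfunHom ω ≠ 0 := by
  obtain ⟨i, hi⟩ := Function.ne_iff.1 hω
  intro h
  apply hi
  simpa [linfun, Pi.single_apply] using DFunLike.congr_fun h (Pi.single i 1)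

lemma two_mul_hamming_linfun_zero_linfun {n : ℕ} {ω : Fin n → ZMod 2} (hω : ω ≠ 0) :
    2 * hamming (linfun 0) (linfun ω) = 2 ^ n := by
  have hcard : Fintype.card (Fin n → ZMod 2) = 2 ^ n := by simp
  rw [← hcard, ← (linfunHom ω).two_mul_card_fiber_one_eq_card (linfunHom_ne_zero hω), hamming,
    linfun_zero]
  congr 2
  ext x
  rw [mem_filter, mem_filter]
  simp [ne_comm, ZMod.ne_zero_iff_eq_one_mod_two]

lemma exists_hamming_linfun_zero_eq {n k : ℕ} (hk : k ≤ 2 ^ n) :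
    ∃ f : (Fin n → ZMod 2) → ZMod 2, hamming f (linfun 0) = k := by
  obtain ⟨S, -, hS⟩ := exists_subset_card_eq (s := (univ : Finset (Fin n → ZMod 2)))
    (by simpa using hk)
  refine ⟨fun x => if x ∈ S then 1 else 0, ?_⟩
  rw [hamming, linfun_zero, ← hS]
  congr 1
  ext x
  by_cases hx : x ∈ S <;> simp [hx]

lemma exists_forall_lt_hamming_linfun {n r : ℕ} (h : 4 * (r + 1) ≤ 2 ^ n) :
    ∃ f : (Fin n → ZMod 2) → ZMod 2,
      hamming f (linfun 0) = r + 1 ∧ ∀ ω, r < hamming f (linfun ω) := by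
  obtain ⟨f, hf⟩ := exists_hamming_linfun_zero_eq (n := n) (k := r + 1) (by omega)
  refine ⟨f, hf, fun ω => ?_⟩
  by_cases hω : ω = 0
  · subst hω
    omega
  have htri : hamming (linfun 0) (linfun ω) ≤ hamming f (linfun 0) + hamming f (linfun ω) := by
    simpa only [hamming_eq_hammingDist, hammingDist_comm (linfun 0) f] using
      hammingDist_triangle (linfun 0) f (linfun ω)
  have := two_mul_hamming_linfun_zero_linfun hω
  omega

theorem stmt_16_general {n : ℕ} (hn : 3 ≤ n) (ε : ℝ)
    (hgap : (3 - 2 * Real.sqrt 2 - 4 * ε) * 2 ^ (n - 3) ≥ 1) :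
    {f : (Fin n → ZMod 2) → ZMod 2 | ∃ ω, hamming f (linfun ω) ≤ 2 ^ (n - 3)}.ncard <
    {f : (Fin n → ZMod 2) → ZMod 2 | ∃ ω,
      (hamming f (linfun ω) : ℝ) ≤ (1 + (3 - 2 * Real.sqrt 2 - 4 * ε)) * 2 ^ (n - 3)}.ncard := by
  obtain ⟨m, rfl⟩ : ∃ m, n = m + 3 := ⟨n - 3, by omega⟩
  simp only [Nat.add_sub_cancel] at hgap ⊢
  set γ : ℝ := 3 - 2 * Real.sqrt 2 - 4 * ε
  have hradius : (2 : ℝ) ^ m + 1 ≤ (1 + γ) * 2 ^ m := by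
    rw [add_mul, one_mul]
    linarith
  obtain ⟨f, hf0, hfar⟩ := exists_forall_lt_hamming_linfun (n := m + 3) (r := 2 ^ m) (by
    have := Nat.one_le_two_pow (n := m)
    rw [pow_add]
    omega)
  refine Set.ncard_lt_ncard ((Set.ssubset_iff_of_subset ?_).2 ⟨f, ⟨0, ?_⟩, ?_⟩) (Set.toFinite _)
  · rintro g ⟨ω, hg⟩
    refine ⟨ω, ?_⟩
    have : (hamming g (linfun ω) : ℝ) ≤ 2 ^ m := by exact_mod_cast hg
    linarith
  · rw [hf0]
    push_cast
    exact hradius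
  · rintro ⟨ω, hω⟩
    exact (hfar ω).not_ge hω

theorem stmt_16 {n : ℕ} (hn : 3 ≤ n) (ε : ℝ) (hε : 0 < ε)
    (hε' : ε < (3 - 2 * Real.sqrt 2) / 4)
    (hgap : (3 - 2 * Real.sqrt 2 - 4 * ε) * 2 ^ (n - 3) ≥ 1) :
    {f : (Fin n → ZMod 2) → ZMod 2 | ∃ ω, hamming f (linfun ω) ≤ 2 ^ (n - 3)}.ncard <
    {f : (Fin n → ZMod 2) → ZMod 2 | ∃ ω,
      (hamming f (linfun ω) : ℝ) ≤ (1 + (3 - 2 * Real.sqrt 2 - 4 * ε)) * 2 ^ (n - 3)}.ncard :=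
  stmt_16_general hn ε hgap
end

section
/- Let n ≥ 1, let T ⊆ {0,1}^n with |T| ≤ 2^{n−1}, let g : T → {0,1} be any assignment of values on T, and let ω ∈ {0,1}^n. Then there exist n-variable Boolean functions f₁ and f₂, both agreeing with g on T, such that W_{f₁}(ω) = 0 and W_{f₂}(ω) ≠ 0. (Hence querying f on at most 2^{n−1} inputs cannot determine whether W_f(ω) is zero.) -/
lemma ham_count {n : ℕ} (T S : Finset (Fin n → ZMod 2)) (hS : S ⊆ Tᶜ)
    (g l : (Fin n → ZMod 2) → ZMod 2) :
    hamming (fun x => if x ∈ T then g x else if x ∈ S then l x + 1 else l x) l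
      = (T.filter (fun x => g x ≠ l x)).card + S.card := by
  have hone : ∀ a : ZMod 2, a + 1 ≠ a := by decide
  unfold hamming
  rw [← Finset.card_union_of_disjoint (by
    rw [Finset.disjoint_left]
    intro x hx
    have := (Finset.mem_filter.1 hx).1
    intro hxS
    exact (Finset.mem_compl.1 (hS hxS)) this)]
  congr 1
  ext x
  by_cases hxT : x ∈ T
  · have hxS : x ∉ S := fun h => (Finset.mem_compl.1 (hS h)) hxT
    simp [hxT, hxS]
  · by_cases hxS : x ∈ S <;> simp [hxT, hxS, hone]

lemma int_zero_case {m : ℕ} : (2:ℤ) ^ (m+1) - 2 * (((2^m : ℕ) : ℤ)) = 0 := by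
  push_cast; ring

lemma int_nonzero_case {m h : ℕ} (hne : h ≠ 2 ^ m) :
    (2:ℤ) ^ (m+1) - 2 * (h : ℤ) ≠ 0 := by
  intro heq
  have h1 : ((2:ℕ) ^ (m+1) : ℤ) = 2 * (h : ℤ) := by push_cast; linarith
  have h2 : (2:ℕ) ^ (m+1) = 2 * h := by exact_mod_cast h1
  have h3 : (2:ℕ) ^ (m+1) = 2 * 2 ^ m := by rw [pow_succ]; ring
  omega

theorem stmt_18 {n : ℕ} (hn : 1 ≤ n) (T : Finset (Fin n → ZMod 2))
    (hT : T.card ≤ 2 ^ (n - 1)) (g : (Fin n → ZMod 2) → ZMod 2)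
    (ω : Fin n → ZMod 2) :
    ∃ f₁ f₂ : (Fin n → ZMod 2) → ZMod 2,
      (∀ x ∈ T, f₁ x = g x) ∧ (∀ x ∈ T, f₂ x = g x) ∧
      walsh f₁ ω = 0 ∧ walsh f₂ ω ≠ 0 := by
  obtain ⟨m, rfl⟩ : ∃ m, n = m + 1 := ⟨n - 1, by omega⟩
  simp only [Nat.add_sub_cancel] at hT
  set l := linfun ω with hl
  set d := (T.filter (fun x => g x ≠ l x)).card with hd
  have hpow : 2 ^ m + 2 ^ m = 2 ^ (m + 1) := by rw [pow_succ]; ring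
  have hdT : d ≤ T.card := Finset.card_filter_le _ _
  have hcompl : (Tᶜ).card = 2 ^ (m + 1) - T.card := by
    rw [Finset.card_compl]; simp [Fintype.card_fun]
  have hsz : 2 ^ m - d ≤ (Tᶜ).card := by omega
  obtain ⟨S, hS, hScard⟩ := Finset.exists_subset_card_eq hsz
  have key : ∀ S' : Finset (Fin (m+1) → ZMod 2), S' ⊆ Tᶜ →
      walsh (fun x => if x ∈ T then g x else if x ∈ S' then l x + 1 else l x) ω
        = 2 ^ (m+1) - 2 * ((d + S'.card : ℕ) : ℤ) := by
    intro S' hS'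
    rw [walsh_eq, ← hl, ham_count T S' hS' g l, ← hd]
  have hpos : 1 ≤ 2 ^ m := Nat.one_le_two_pow
  have hS1 : d + S.card = 2 ^ m := by omega
  by_cases hcase : d = 2 ^ m
  · refine ⟨fun x => if x ∈ T then g x else if x ∈ S then l x + 1 else l x,
      fun x => if x ∈ T then g x else if x ∈ Tᶜ then l x + 1 else l x,
      fun x hx => by simp [hx], fun x hx => by simp [hx], ?_, ?_⟩
    · rw [key S hS, hS1]; exact int_zero_case
    · rw [key Tᶜ (le_refl _)]
      exact int_nonzero_case (by omega)
  · refine ⟨fun x => if x ∈ T then g x else if x ∈ S then l x + 1 else l x,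
      fun x => if x ∈ T then g x else if x ∈ (∅ : Finset _) then l x + 1 else l x,
      fun x hx => by simp [hx], fun x hx => by simp [hx], ?_, ?_⟩
    · rw [key S hS, hS1]; exact int_zero_case
    · rw [key ∅ (by simp)]
      exact int_nonzero_case (by simpa using hcase)
end
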